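/- arXiv:1404.7822 — 3 statements merged into one kernel-verified Lean document; each statement's English description precedes it below -/
import Mathlib

section
/- There exists t ∈ su(4) such that t and t' = S t S generate su(4) as a real Lie algebra, i.e. the smallest Lie subalgebra of su(4) containing t and t' equals su(4). -/
/-!
Take `t = i M` with `M` an integer symmetric matrix. Thirteen iterated brackets of `t` and
`S t S` give fifteen matrices with Gaussian-integer entries, and an explicit integer matrix
expresses `56` times each element of the standard basis of su(4) as an integer combination of
them. Hence their real span, which lies in the Lie algebra generated by `t` and `S t S`, is all
of su(4). The matrix identities are decided by computation over `ℤ[i]` and transported to `ℂ`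
along `ℤ[i] → ℂ`.
-/

open Matrix

attribute [local instance 100] LieRing.ofAssociativeRing

/-- The Swap matrix on ℂ² ⊗ ℂ² ≅ ℂ⁴. -/
noncomputable def S : Matrix (Fin 4) (Fin 4) ℂ :=
  !![1,0,0,0; 0,0,1,0; 0,1,0,0; 0,0,0,1]

/-- su(4): traceless skew-Hermitian 4×4 complex matrices, as a real Lie algebra
(a Lie subalgebra of the 4×4 complex matrices with commutator bracket). -/
def su4 : LieSubalgebra ℝ (Matrix (Fin 4) (Fin 4) ℂ) where
  carrier := {A | Aᴴ = -A ∧ A.trace = 0}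
  add_mem' := by
    rintro A B ⟨hA1, hA2⟩ ⟨hB1, hB2⟩
    exact ⟨by rw [conjTranspose_add, hA1, hB1, neg_add], by rw [trace_add, hA2, hB2, add_zero]⟩
  zero_mem' := by
    exact ⟨by simp, by simp⟩
  smul_mem' := by
    rintro c A ⟨hA1, hA2⟩
    refine ⟨?_, ?_⟩
    · rw [conjTranspose_smul, hA1, star_trivial, smul_neg]
    · rw [trace_smul, hA2, smul_zero]
  lie_mem' := by
    rintro A B ⟨hA1, hA2⟩ ⟨hB1, hB2⟩
    refine ⟨?_, ?_⟩
    · simp only [Ring.lie_def, conjTranspose_sub, conjTranspose_mul, hA1, hB1,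
        neg_mul, mul_neg, neg_neg, neg_sub]
    · simp only [Ring.lie_def, trace_sub, trace_mul_comm A B, sub_self]

theorem List.getD_of_forall_mem {α : Type*} {p : α → Prop} {l : List α} {d : α} (hd : p d)
    (hl : ∀ x ∈ l, p x) (n : ℕ) : p (l.getD n d) := by
  by_cases hn : n < l.length
  · rw [List.getD_eq_getElem _ _ hn]
    exact hl _ (List.getElem_mem hn)
  · rwa [List.getD_eq_default _ _ (not_lt.1 hn)]

section BracketChain

variable {R L L' : Type*} [CommRing R] [LieRing L] [LieAlgebra R L] [LieRing L'] [LieAlgebra R L']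

def appendBracket (l : List L) (p : ℕ × ℕ) : List L :=
  l ++ [⁅l.getD p.1 0, l.getD p.2 0⁆]

def bracketChain (l : List L) (plan : List (ℕ × ℕ)) : List L :=
  plan.foldl appendBracket l

theorem LieSubalgebra.mem_of_mem_bracketChain (K : LieSubalgebra R L) {l : List L}
    (hl : ∀ x ∈ l, x ∈ K) (plan : List (ℕ × ℕ)) : ∀ x ∈ bracketChain l plan, x ∈ K := by
  induction plan generalizing l with
  | nil => exact hl
  | cons p plan ih =>
    refine ih fun x hx => ?_
    rcases List.mem_append.1 hx with hx | hx
    · exact hl x hx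
    · rw [List.mem_singleton.1 hx]
      exact K.lie_mem (List.getD_of_forall_mem K.zero_mem hl _)
        (List.getD_of_forall_mem K.zero_mem hl _)

theorem LieHom.map_bracketChain (f : L →ₗ⁅R⁆ L') (l : List L) (plan : List (ℕ × ℕ)) :
    (bracketChain l plan).map f = bracketChain (l.map f) plan := by
  induction plan generalizing l with
  | nil => rfl
  | cons p plan ih =>
    simp only [bracketChain, List.foldl_cons] at ih ⊢
    rw [ih]
    congr 1
    simp only [appendBracket, List.map_append, List.map_cons, List.map_nil, LieHom.map_lie]
    rw [← map_zero f, List.getD_map, List.getD_map]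

end BracketChain

theorem S_mul_mul_S (M : Matrix (Fin 4) (Fin 4) ℂ) :
    S * M * S = M.submatrix (Equiv.swap 1 2) (Equiv.swap 1 2) := by
  ext i j
  fin_cases i <;> fin_cases j <;>
    simp [S, mul_apply, Fin.sum_univ_four, vecMul, dotProduct, Equiv.swap_apply_of_ne_of_ne]

theorem map_toComplex_mem_su4 {M : Matrix (Fin 4) (Fin 4) GaussianInt} (hM : Mᴴ = -M)
    (htr : M.trace = 0) : M.map GaussianInt.toComplex ∈ su4 := by
  refine ⟨?_, ?_⟩
  · rw [← conjTranspose_map _ GaussianInt.toComplex_star, hM, Matrix.map_neg _ (map_neg _)]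
  · rw [← AddMonoidHom.map_trace, htr, map_zero]

local notation "𝕚" => (Zsqrtd.sqrtd : GaussianInt)

theorem GaussianInt.toComplex_sqrtd : GaussianInt.toComplex 𝕚 = Complex.I := by
  simp [GaussianInt.toComplex_def]

def suBasis : Fin 15 → Matrix (Fin 4) (Fin 4) GaussianInt :=
  ![single 0 1 1 - single 1 0 1, single 0 1 𝕚 + single 1 0 𝕚,
    single 0 2 1 - single 2 0 1, single 0 2 𝕚 + single 2 0 𝕚,
    single 0 3 1 - single 3 0 1, single 0 3 𝕚 + single 3 0 𝕚,
    single 1 2 1 - single 2 1 1, single 1 2 𝕚 + single 2 1 𝕚,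
    single 1 3 1 - single 3 1 1, single 1 3 𝕚 + single 3 1 𝕚,
    single 2 3 1 - single 3 2 1, single 2 3 𝕚 + single 3 2 𝕚,
    single 0 0 𝕚 - single 3 3 𝕚, single 1 1 𝕚 - single 3 3 𝕚, single 2 2 𝕚 - single 3 3 𝕚]

theorem eq_sum_suBasis {A : Matrix (Fin 4) (Fin 4) ℂ} (hA : A ∈ su4) :
    A = ∑ k, ![(A 0 1).re, (A 0 1).im, (A 0 2).re, (A 0 2).im, (A 0 3).re, (A 0 3).im,
      (A 1 2).re, (A 1 2).im, (A 1 3).re, (A 1 3).im, (A 2 3).re, (A 2 3).im,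
      (A 0 0).im, (A 1 1).im, (A 2 2).im] k • (suBasis k).map GaussianInt.toComplex := by
  obtain ⟨hskew, htr⟩ := hA
  have hentry (i j : Fin 4) : A j i = -star (A i j) := by
    have h := congrFun (congrFun hskew j) i
    rw [conjTranspose_apply, neg_apply] at h
    rw [h, neg_neg]
  have hdiag (i : Fin 4) : (A i i).re = 0 := by
    have h := congrArg Complex.re (hentry i i)
    simp only [Complex.star_def, Complex.neg_re, Complex.conj_re] at h
    linarith
  have h33 : A 3 3 = -(A 0 0 + A 1 1 + A 2 2) := by
    simp only [trace, diag, Fin.sum_univ_four] at htr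
    linear_combination htr
  ext i j
  fin_cases i <;> fin_cases j <;>
    simp [Fin.sum_univ_succ, suBasis, GaussianInt.toComplex_sqrtd, Complex.ext_iff, hentry 1 0,
      hentry 2 0, hentry 3 0, hentry 2 1, hentry 3 1, hentry 3 2, h33, hdiag]
  ring

theorem su4_le_span_suBasis :
    su4.toSubmodule ≤
      Submodule.span ℝ (Set.range fun k => (suBasis k).map GaussianInt.toComplex) := by
  intro A hA
  rw [eq_sum_suBasis hA]
  exact Submodule.sum_mem _ fun k _ => Submodule.smul_mem _ _ (Submodule.subset_span ⟨k, rfl⟩)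

def t₀ : Matrix (Fin 4) (Fin 4) GaussianInt :=
  𝕚 • !![-1, -1, -1, 1; -1, 0, 0, 0; -1, 0, -1, 0; 1, 0, 0, 2]

def t₀Plan : List (ℕ × ℕ) :=
  [(0, 1), (0, 2), (1, 2), (0, 3), (1, 3), (2, 3), (3, 4), (0, 5), (1, 5), (2, 5), (3, 5), (4, 5),
    (3, 7)]

def t₀Chain : List (Matrix (Fin 4) (Fin 4) GaussianInt) :=
  bracketChain [t₀, t₀.submatrix (Equiv.swap 1 2) (Equiv.swap 1 2)] t₀Plan

/-- Found by exact Gaussian elimination over `ℚ`; `56` is the least common denominator. -/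
def suBasisCoeffs : Matrix (Fin 15) (Fin 15) ℤ :=
  !![  0,   0, -196,   0,    0, -112,  196,   0,  420,   0,   0,  0,   0,   0, -56;
     -72,  72,    0,  56,    4,    0,    0,   8,    0,  -4,  12,  0,   0,   0,   0;
       0,   0, -140,   0,    0, -112,  196,   0,  420,   0,   0,  0,   0,   0, -56;
      72, -72,    0,   0,  -60,    0,    0,  -8,    0,   4, -12,  0,   0,   0,   0;
       0,   0,  112,   0,    0,   56,  -98,   0, -224,   0,   0, 14,   0,   0,  28;
      64,  48,    0,  84, -128,    0,    0,  24,    0,  44, -48,  0,   0, -28,   0;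
       0,   0, -112,   0,    0,    0,    0,   0,   56,   0,   0,  0,   0,   0,   0;
     -96,  96,    0, -84,   24,    0,    0, -36,    0,   4, -12,  0,  28, -28,   0;
       0,   0,   84,   0,    0,   84, -140,   0, -224,   0,   0,  0,   0,   0,  28;
      96, -96,    0, -14,   32,    0,    0,  22,    0, -18,  26,  0, -14,  14,   0;
       0,   0,  112,   0,    0,   84, -112,   0, -196,   0,   0,  0,   0,   0,  28;
      56, -56,    0, -14,   28,    0,    0,  14,    0, -14,  14,  0, -14,  14,   0;
      88,  -4,    0,  49,  -78,    0,    0,  19,    0,  43, -45,  0,  -7, -21,   0;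
     -24,  -4,    0, -21,    6,    0,    0,   5,    0,   1,  -3,  0,   7,  -7,   0;
     -80,  52,    0, -21,    6,    0,    0,   5,    0,   1,  -3,  0,   7,  -7,   0]

theorem smul_suBasis_eq_sum (k : Fin 15) :
    56 • suBasis k = ∑ j : Fin 15, suBasisCoeffs k j • t₀Chain.getD j 0 := by
  revert k
  decide +kernel

theorem map_t₀Chain :
    t₀Chain.map (·.map GaussianInt.toComplex) =
      bracketChain [t₀.map GaussianInt.toComplex, S * t₀.map GaussianInt.toComplex * S] t₀Plan :=
  (LieHom.map_bracketChain
    (GaussianInt.toComplex.mapMatrix (m := Fin 4)).toIntAlgHom.toLieHom _ t₀Plan).trans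
    (by simp [S_mul_mul_S, submatrix_map])

theorem map_suBasis_mem_span (k : Fin 15) :
    (suBasis k).map GaussianInt.toComplex ∈
      Submodule.span ℝ {x | x ∈ t₀Chain.map (·.map GaussianInt.toComplex)} := by
  set V := Submodule.span ℝ {x | x ∈ t₀Chain.map (·.map GaussianInt.toComplex)}
  have hchain (j : ℕ) : (t₀Chain.getD j 0).map GaussianInt.toComplex ∈ V :=
    List.getD_of_forall_mem (p := fun M : Matrix (Fin 4) (Fin 4) GaussianInt => M.map _ ∈ V)
      (by simp [V.zero_mem]) (fun M hM => Submodule.subset_span (List.mem_map.2 ⟨M, hM, rfl⟩)) j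
  have h := congrArg GaussianInt.toComplex.mapMatrix (smul_suBasis_eq_sum k)
  rw [map_nsmul, map_sum] at h
  rw [← V.smul_mem_iff (by norm_num : (56 : ℝ) ≠ 0), ofNat_smul_eq_nsmul ℝ,
    ← RingHom.mapMatrix_apply, h]
  refine V.sum_mem fun j _ => ?_
  rw [map_zsmul, ← Int.cast_smul_eq_zsmul ℝ]
  exact V.smul_mem _ (hchain j)

/-- there exists t ∈ su(4) such that t and t' = S t S generate su(4)
as a real Lie algebra. -/
theorem exists_generating_pair :
    ∃ t : Matrix (Fin 4) (Fin 4) ℂ, t ∈ su4 ∧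
      LieSubalgebra.lieSpan ℝ (Matrix (Fin 4) (Fin 4) ℂ) {t, S * t * S} = su4 := by
  have ht : t₀.map GaussianInt.toComplex ∈ su4 :=
    map_toComplex_mem_su4 (by decide +kernel) (by decide +kernel)
  have ht' : S * t₀.map GaussianInt.toComplex * S ∈ su4 := by
    rw [S_mul_mul_S, submatrix_map]
    exact map_toComplex_mem_su4 (by decide +kernel) (by decide +kernel)
  set t := t₀.map GaussianInt.toComplex
  refine ⟨t, ht, le_antisymm ?_ ?_⟩
  · rw [LieSubalgebra.lieSpan_le]
    rintro _ (rfl | rfl)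
    exacts [ht, ht']
  · have hchain := (LieSubalgebra.lieSpan ℝ _ _).mem_of_mem_bracketChain (l := [t, S * t * S])
      (fun x hx => LieSubalgebra.subset_lieSpan (List.mem_pair.1 hx)) t₀Plan
    rw [← map_t₀Chain] at hchain
    rw [← LieSubalgebra.toSubmodule_le_toSubmodule]
    refine su4_le_span_suBasis.trans (Submodule.span_le.2 ?_)
    rintro _ ⟨k, rfl⟩
    exact Submodule.span_le.2 hchain (map_suBasis_mem_span k)
end

section
/- Let G be a compact topological group, let φ : ℝ → G be a continuous group homomorphism from the additive reals (a one-parameter subgroup P = range φ), and let a < b be real numbers, so that I = φ([a,b]) is an interval of P. Then P is contained in the closure of the set ⋃_{k ∈ ℤ} {x^k : x ∈ I} = {φ(t)^k : t ∈ [a,b], k ∈ ℤ}; i.e. the union of all integer powers of I is dense in P (with its induced topology). -/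
/-!
For `0 < c < d` the intervals `[n c, n d]`, `n ∈ ℕ`, overlap once `n ≥ c / (d - c)`, so their
union contains a half-line; reflecting `t ↦ -t` handles intervals on the negative side. Since
`φ t ^ k = φ (k t)`, every `φ u` with `u` large is a power of an element of `φ([a, b])`. In a
compact group `1` is a cluster point of the powers of `φ 1`, so `φ s` is a cluster point of
`φ s * φ 1 ^ n = φ (s + n)`.
-/

open Filter Set

theorem map_zsmul_of_map_add {A G : Type*} [AddGroup A] [Group G] {φ : A → G}
    (hφ : ∀ s t, φ (s + t) = φ s * φ t) (k : ℤ) (t : A) : φ (k • t) = φ t ^ k :=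
  map_zpow (MonoidHom.mk' (φ ∘ Multiplicative.toAdd) fun _ _ ↦ hφ _ _) (.ofAdd t) k

theorem exists_nat_mul_mem_Icc {c d u : ℝ} (hc : 0 < c) (hcd : c < d)
    (hu : c * d / (d - c) ≤ u) : ∃ n : ℕ, ∃ t ∈ Icc c d, n * t = u := by
  have hd : 0 < d := hc.trans hcd
  have hu₀ : 0 < u := (div_pos (mul_pos hc hd) (sub_pos.2 hcd)).trans_le hu
  set n := ⌈u / d⌉₊
  have hn : (0 : ℝ) < n := Nat.cast_pos.2 (Nat.ceil_pos.2 (div_pos hu₀ hd))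
  refine ⟨n, u / n, ⟨?_, ?_⟩, mul_div_cancel₀ u hn.ne'⟩
  · have hn_lt : ((n : ℝ) - 1) * d < u :=
      (lt_div_iff₀ hd).1 (by linarith [Nat.ceil_lt_add_one (div_pos hu₀ hd).le])
    have hcd_le : c * d ≤ u * (d - c) := (div_le_iff₀ (sub_pos.2 hcd)).1 hu
    rw [le_div_iff₀ hn]
    nlinarith [mul_lt_mul_of_pos_left hn_lt hc]
  · rw [div_le_iff₀ hn, ← div_le_iff₀' hd]
    exact Nat.le_ceil _

theorem eventually_exists_int_mul_mem_Icc {a b : ℝ} (hab : a < b) :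
    ∀ᶠ u in atTop, ∃ k : ℤ, ∃ t ∈ Icc a b, k * t = u := by
  wlog hb : 0 < b generalizing a b
  · filter_upwards [this (neg_lt_neg hab) (by linarith)] with u ⟨k, t, ht, hkt⟩
    exact ⟨-k, -t, ⟨by linarith [ht.2], by linarith [ht.1]⟩, by push_cast; linarith⟩
  set c := max a (b / 2)
  have hc : 0 < c := (half_pos hb).trans_le (le_max_right _ _)
  have hcb : c < b := max_lt hab (half_lt_self hb)
  filter_upwards [eventually_ge_atTop (c * b / (b - c))] with u hu
  obtain ⟨n, t, ht, hnt⟩ := exists_nat_mul_mem_Icc hc hcb hu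
  exact ⟨n, t, Icc_subset_Icc (le_max_left _ _) le_rfl ht, mod_cast hnt⟩

theorem powers_of_interval_dense_in_one_parameter_subgroup_general
    {G : Type*} [Group G] [TopologicalSpace G] [IsTopologicalGroup G]
    [CompactSpace G]
    (φ : ℝ → G) (hhom : ∀ s t : ℝ, φ (s + t) = φ s * φ t)
    (a b : ℝ) (hab : a < b) :
    Set.range φ ⊆ closure {x : G | ∃ t ∈ Set.Icc a b, ∃ k : ℤ, x = φ t ^ k} := by
  set S := {x : G | ∃ t ∈ Set.Icc a b, ∃ k : ℤ, x = φ t ^ k}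
  rintro _ ⟨s, rfl⟩
  have hpowers : ∀ᶠ u in atTop, φ u ∈ S := by
    filter_upwards [eventually_exists_int_mul_mem_Icc hab] with u ⟨k, t, ht, hkt⟩
    exact ⟨t, ht, k, by rw [← hkt, ← zsmul_eq_mul, map_zsmul_of_map_add hhom]⟩
  have hone : MapClusterPt 1 atTop (φ 1 ^ · : ℤ → G) :=
    mapClusterPt_atTop_zpow_iff_pow.2 (mapClusterPt_one_atTop_pow (φ 1))
  have hcluster : MapClusterPt (φ s) atTop (fun n : ℤ ↦ φ s * φ 1 ^ n) := by
    simpa only [mul_one, Function.comp_def] using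
      hone.continuousAt_comp (continuous_const_mul (φ s)).continuousAt
  refine isClosed_closure.mem_of_mapClusterPt hcluster ?_
  have hshift : Tendsto (fun n : ℤ ↦ s + n) atTop atTop :=
    tendsto_atTop_add_const_left _ s tendsto_intCast_atTop_atTop
  filter_upwards [hshift.eventually hpowers] with n hn
  rw [← map_zsmul_of_map_add hhom, zsmul_one, ← hhom]
  exact subset_closure hn

/-- let G be a compact Hausdorff topological group, φ : ℝ → G a continuous
homomorphism from the additive reals (so P = range φ is a one-parameter subgroup), and
a < b reals, so I = φ([a,b]) is an interval of P. Then P is contained in the closure of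
the union over k ∈ ℤ of the k-th power sets of I; i.e. ⋃ₖ Iᵏ is dense in P. -/
theorem powers_of_interval_dense_in_one_parameter_subgroup
    {G : Type*} [Group G] [TopologicalSpace G] [IsTopologicalGroup G]
    [CompactSpace G] [T2Space G]
    (φ : ℝ → G) (hcont : Continuous φ) (hhom : ∀ s t : ℝ, φ (s + t) = φ s * φ t)
    (a b : ℝ) (hab : a < b) :
    Set.range φ ⊆ closure {x : G | ∃ t ∈ Set.Icc a b, ∃ k : ℤ, x = φ t ^ k} :=
  powers_of_interval_dense_in_one_parameter_subgroup_general φ hhom a b hab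
end

section
/- Lines of irrational slope are dense in the d-torus: if θ₁, …, θ_d are real numbers that are linearly independent over ℚ, then the one-parameter subgroup {(tθ₁ mod 1, …, tθ_d mod 1) : t ∈ ℝ} is dense in the torus (ℝ/ℤ)^d. -/
/-!
Let `S` be the closure of the line; it is a closed subgroup of the torus. Push the Haar measure
of `S` forward to a measure `ν` on the torus. A character `mFourier n` with `n ≠ 0` is
nontrivial on the line, because `∑ nᵢ θᵢ ≠ 0` by linear independence, so invariance of `ν` under
translation by a point of `S` forces `∫ mFourier n ∂ν = 0`. Then every translate of `ν` has the
same Fourier coefficients as `ν`, and since characters span a dense subspace of the continuous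
functions, `ν` is invariant under all translations. A nonzero measure concentrated on `S` can only
be invariant under translations by elements of `S`, hence `S` is the whole torus.
-/

open MeasureTheory UnitAddTorus

namespace ContinuousMap

variable {X 𝕜 : Type*} [TopologicalSpace X] [CompactSpace X] [MeasurableSpace X] [BorelSpace X]
  [RCLike 𝕜]

noncomputable def integralCLM (μ : Measure X) [IsFiniteMeasure μ] : C(X, 𝕜) →L[𝕜] 𝕜 :=
  (L1.integralCLM' 𝕜).comp (toLp 1 μ 𝕜)

theorem integralCLM_apply (μ : Measure X) [IsFiniteMeasure μ] (f : C(X, 𝕜)) :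
    integralCLM μ f = ∫ x, f x ∂μ := by
  rw [integralCLM, ContinuousLinearMap.comp_apply, ← L1.integral_eq', L1.integral_eq_integral,
    integral_congr_ae (coeFn_toLp μ f)]

end ContinuousMap

theorem MeasureTheory.integral_eq_zero_of_map_add_left_eq {G : Type*} [AddGroup G]
    [MeasurableSpace G] [MeasurableAdd G] {ν : Measure G} {χ : G → ℂ} {s : G}
    (hs : ν.map (s + ·) = ν) (hχ : ∀ g, χ (s + g) = χ s * χ g) (hχs : χ s ≠ 1) :
    ∫ g, χ g ∂ν = 0 := by
  have h : ∫ g, χ g ∂ν = χ s * ∫ g, χ g ∂ν := by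
    conv_lhs => rw [← hs]
    rw [show (s + ·) = MeasurableEquiv.addLeft s from rfl, integral_map_equiv]
    simp_rw [MeasurableEquiv.coe_addLeft, hχ, integral_const_mul]
  by_contra h0
  exact hχs ((mul_eq_right₀ h0).mp h.symm)

theorem AddSubgroup.mem_of_map_add_left_eq {G : Type*} [AddGroup G] [MeasurableSpace G]
    [MeasurableAdd G] {S : AddSubgroup G} (hS : MeasurableSet (S : Set G)) {ν : Measure G}
    (hν : ν ≠ 0) (hνS : ν (S : Set G)ᶜ = 0) {x : G} (hx : ν.map (x + ·) = ν) : x ∈ S := by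
  by_contra hxS
  have hSsub : (S : Set G) ⊆ (x + ·) ⁻¹' (S : Set G)ᶜ := fun s hs hxs =>
    hxS (by simpa using S.sub_mem hxs hs)
  have hνS' : ν S = 0 := by
    refine le_antisymm ?_ bot_le
    calc ν S ≤ ν ((x + ·) ⁻¹' (S : Set G)ᶜ) := measure_mono hSsub
      _ = ν (S : Set G)ᶜ := by rw [← Measure.map_apply (measurable_const_add x) hS.compl, hx]
      _ = 0 := hνS
  refine hν (Measure.measure_univ_eq_zero.mp (le_antisymm ?_ bot_le))
  calc ν Set.univ ≤ ν S + ν (S : Set G)ᶜ := measure_univ_le_add_compl _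
    _ = 0 := by rw [hνS, hνS', add_zero]

namespace UnitAddTorus

variable {d : Type*} [Fintype d]

theorem mFourier_apply_add (n : d → ℤ) (x y : UnitAddTorus d) :
    mFourier n (x + y) = mFourier n x * mFourier n y := by
  simp only [mFourier, ContinuousMap.coe_mk, ← Finset.prod_mul_distrib, Pi.add_apply,
    fourier_apply, smul_add, AddCircle.toCircle_add, Circle.coe_mul]

theorem measure_ext_of_integral_mFourier_eq {μ ν : Measure (UnitAddTorus d)}
    [IsFiniteMeasure μ] [IsFiniteMeasure ν]
    (h : ∀ n, ∫ x, mFourier n x ∂μ = ∫ x, mFourier n x ∂ν) : μ = ν := by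
  have hL : ContinuousMap.integralCLM (𝕜 := ℂ) μ = ContinuousMap.integralCLM ν := by
    refine ContinuousLinearMap.ext_on
      (Submodule.dense_iff_topologicalClosure_eq_top.mpr span_mFourier_closure_eq_top) ?_
    rintro _ ⟨n, rfl⟩
    simpa only [ContinuousMap.integralCLM_apply] using h n
  refine ext_of_forall_integral_eq_of_IsFiniteMeasure fun f => ?_
  have hf := congr($hL ((ContinuousMap.mk ((↑) : ℝ → ℂ) Complex.continuous_ofReal).comp
    f.toContinuousMap))
  simpa only [ContinuousMap.integralCLM_apply, ContinuousMap.comp_apply, ContinuousMap.coe_mk,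
    BoundedContinuousFunction.coe_toContinuousMap, integral_complex_ofReal,
    Complex.ofReal_inj] using hf

theorem addSubgroup_eq_top_of_forall_mFourier_ne_one {S : AddSubgroup (UnitAddTorus d)}
    (hS : IsClosed (S : Set (UnitAddTorus d)))
    (h : ∀ n ≠ 0, ∃ s ∈ S, mFourier n s ≠ 1) : S = ⊤ := by
  have : CompactSpace S := isCompact_iff_compactSpace.mp hS.isCompact
  set ν : Measure (UnitAddTorus d) := (Measure.addHaar : Measure S).map (↑)
  have hν_inv : ∀ s ∈ S, ν.map (s + ·) = ν := fun s hs => by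
    rw [Measure.map_map (measurable_const_add s) measurable_subtype_coe,
      show (s + ·) ∘ ((↑) : S → UnitAddTorus d) = (↑) ∘ ((⟨s, hs⟩ : S) + ·) from rfl,
      ← Measure.map_map measurable_subtype_coe (measurable_const_add _),
      map_add_left_eq_self]
  have hν_mFourier : ∀ n ≠ 0, ∫ x, mFourier n x ∂ν = 0 := fun n hn => by
    obtain ⟨s, hs, hns⟩ := h n hn
    exact integral_eq_zero_of_map_add_left_eq (hν_inv s hs) (mFourier_apply_add n s) hns
  have hν_add : ∀ x, ν.map (x + ·) = ν := fun x => by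
    refine measure_ext_of_integral_mFourier_eq fun n => ?_
    rw [show (x + ·) = MeasurableEquiv.addLeft x from rfl, integral_map_equiv]
    simp_rw [MeasurableEquiv.coe_addLeft, mFourier_apply_add, integral_const_mul]
    rcases eq_or_ne n 0 with rfl | hn
    · simp [mFourier_zero]
    · rw [hν_mFourier n hn, mul_zero]
  have hν : ν ≠ 0 :=
    (Measure.map_ne_zero_iff measurable_subtype_coe.aemeasurable).mpr (NeZero.ne _)
  have hνS : ν (S : Set (UnitAddTorus d))ᶜ = 0 := by
    rw [Measure.map_apply measurable_subtype_coe hS.measurableSet.compl, Set.preimage_compl,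
      Subtype.coe_preimage_self, Set.compl_univ, measure_empty]
  exact eq_top_iff.mpr fun x _ => S.mem_of_map_add_left_eq hS.measurableSet hν hνS (hν_add x)

theorem dense_of_forall_mFourier_ne_one (H : AddSubgroup (UnitAddTorus d))
    (h : ∀ n ≠ 0, ∃ x ∈ H, mFourier n x ≠ 1) : Dense (H : Set (UnitAddTorus d)) := by
  have hH : H.topologicalClosure = ⊤ :=
    addSubgroup_eq_top_of_forall_mFourier_ne_one H.isClosed_topologicalClosure fun n hn =>
      (h n hn).imp fun _ ⟨hx, hnx⟩ => ⟨H.le_topologicalClosure hx, hnx⟩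
  rw [dense_iff_closure_eq, ← H.topologicalClosure_coe, hH, AddSubgroup.coe_top]

def lineHom (θ : d → ℝ) : ℝ →+ UnitAddTorus d :=
  AddMonoidHom.mk' (fun t i => ((t * θ i : ℝ) : UnitAddCircle)) fun a b => by
    ext i
    simp only [add_mul, AddCircle.coe_add, Pi.add_apply]

theorem mFourier_lineHom (n : d → ℤ) (θ : d → ℝ) (t : ℝ) :
    mFourier n (lineHom θ t) =
      Complex.exp (2 * Real.pi * Complex.I * (t * ∑ i, (n i : ℝ) * θ i : ℝ)) := by
  simp only [mFourier, lineHom, ContinuousMap.coe_mk, AddMonoidHom.mk'_apply, fourier_coe_apply,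
    ← Complex.exp_sum]
  push_cast
  rw [Finset.mul_sum, Finset.mul_sum]
  exact congrArg Complex.exp (Finset.sum_congr rfl fun i _ => by ring)

end UnitAddTorus

/-- lines of irrational slope are dense in the d-torus: if θ₁,…,θ_d are real
numbers linearly independent over ℚ, then the one-parameter subgroup
{(tθ₁ mod 1, …, tθ_d mod 1) : t ∈ ℝ} is dense in (ℝ/ℤ)^d. -/
theorem line_dense_in_torus (d : ℕ) (θ : Fin d → ℝ) (hθ : LinearIndependent ℚ θ) :
    Dense (Set.range (fun t : ℝ => fun i : Fin d => ((t * θ i : ℝ) : AddCircle (1 : ℝ)))) := by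
  refine dense_of_forall_mFourier_ne_one (lineHom θ).range fun n hn => ?_
  set l := ∑ i, (n i : ℝ) * θ i with hl_def
  have hl : l ≠ 0 := fun hl => hn <| funext <|
    Fintype.linearIndependent_iff.mp (hθ.restrict_scalars' ℤ) n (by simpa [zsmul_eq_mul] using hl)
  refine ⟨lineHom θ (1 / (2 * l)), ⟨_, rfl⟩, ?_⟩
  have h_half : 2 * Real.pi * Complex.I * ((1 / (2 * l) * l : ℝ) : ℂ) = Real.pi * Complex.I := by
    rw [one_div_mul_eq_div, div_mul_cancel_right₀ hl]
    push_cast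
    ring
  rw [mFourier_lineHom, ← hl_def, h_half, Complex.exp_pi_mul_I]
  norm_num
end
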